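/- arXiv:2401.15567 — 2 statements merged into one kernel-verified Lean document; each statement's English description precedes it below -/
import Mathlib

section
/- Let {Yₙ}_{n≥0} be a matrix supermartingale adapted to a filtration {Fₙ} that is almost surely positive semidefinite at every time n, let τ be an almost surely finite stopping time with respect to {Fₙ}, let U be a trace super-uniform random d×d positive semidefinite matrix independent of F_∞, and let A be a d×d symmetric positive definite matrix. Then P( Y_τ ⋠ A^{1/2} U A^{1/2} ) ≤ tr( E[Y₀] · A⁻¹ ). -/
open MeasureTheory ProbabilityTheory Matrix Filter

noncomputable section

/-- Measurable space structure on matrices (entrywise). -/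
instance matMS (d : ℕ) : MeasurableSpace (Matrix (Fin d) (Fin d) ℝ) :=
  inferInstanceAs (MeasurableSpace (Fin d → Fin d → ℝ))

/-- Loewner order: `A ⪯ B` iff `B - A` is positive semidefinite. -/
def LoewnerLE {d : ℕ} (A B : Matrix (Fin d) (Fin d) ℝ) : Prop := (B - A).PosSemidef

/-- Entrywise expectation of a random matrix. -/
def matExpect {Ω : Type*} {_ : MeasurableSpace Ω} {d : ℕ} (μ : Measure Ω)
    (X : Ω → Matrix (Fin d) (Fin d) ℝ) : Matrix (Fin d) (Fin d) ℝ :=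
  Matrix.of fun i j => ∫ ω, X ω i j ∂μ

/-- Entrywise conditional expectation of a random matrix. -/
def matCondExp {Ω : Type*} {m0 : MeasurableSpace Ω} {d : ℕ} (μ : Measure Ω)
    (m : MeasurableSpace Ω) (X : Ω → Matrix (Fin d) (Fin d) ℝ) : Ω → Matrix (Fin d) (Fin d) ℝ :=
  fun ω => Matrix.of fun i j => (μ[fun ω' => X ω' i j | m]) ω

/-- Spectral functional calculus for real symmetric matrices: apply `f` to the eigenvalues. -/
def matCFC {d : ℕ} (f : ℝ → ℝ) (X : Matrix (Fin d) (Fin d) ℝ) : Matrix (Fin d) (Fin d) ℝ :=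
  if hX : X.IsHermitian then
    (hX.eigenvectorUnitary : Matrix (Fin d) (Fin d) ℝ) *
      Matrix.diagonal (fun i => f (hX.eigenvalues i)) *
      star (hX.eigenvectorUnitary : Matrix (Fin d) (Fin d) ℝ)
  else 0

/-- Positive semidefinite square root (via the spectral calculus). -/
def matSqrt {d : ℕ} (X : Matrix (Fin d) (Fin d) ℝ) : Matrix (Fin d) (Fin d) ℝ :=
  matCFC Real.sqrt X

/-- Matrix absolute value of a symmetric matrix. -/
def matAbs {d : ℕ} (X : Matrix (Fin d) (Fin d) ℝ) : Matrix (Fin d) (Fin d) ℝ :=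
  matCFC (fun x => |x|) X

/-- Real power of a symmetric (positive (semi)definite) matrix. -/
def matRPow {d : ℕ} (p : ℝ) (X : Matrix (Fin d) (Fin d) ℝ) : Matrix (Fin d) (Fin d) ℝ :=
  matCFC (fun x => x ^ p) X

/-- Matrix logarithm of a positive definite matrix. -/
def matLog {d : ℕ} (X : Matrix (Fin d) (Fin d) ℝ) : Matrix (Fin d) (Fin d) ℝ :=
  matCFC Real.log X

/-- Matrix exponential. -/
def matExpMat {d : ℕ} (X : Matrix (Fin d) (Fin d) ℝ) : Matrix (Fin d) (Fin d) ℝ :=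
  NormedSpace.exp X

/-- Largest eigenvalue of a symmetric matrix. -/
def lamMax {d : ℕ} (X : Matrix (Fin d) (Fin d) ℝ) : ℝ :=
  if hX : X.IsHermitian then ⨆ i, hX.eigenvalues i else 0

/-- Operator (spectral) norm: the largest absolute value of an eigenvalue. -/
def specNorm {d : ℕ} (X : Matrix (Fin d) (Fin d) ℝ) : ℝ :=
  if hX : X.IsHermitian then ⨆ i, |hX.eigenvalues i| else 0

/-- A random positive semidefinite matrix `U` is trace super-uniform if
`P(U ⋡ Y) ≤ tr Y` for every positive semidefinite `Y`. -/
def TraceSuperUniform {Ω : Type*} {_ : MeasurableSpace Ω} {d : ℕ} (μ : Measure Ω)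
    (U : Ω → Matrix (Fin d) (Fin d) ℝ) : Prop :=
  ∀ Y : Matrix (Fin d) (Fin d) ℝ, Y.PosSemidef →
    μ {ω | ¬ LoewnerLE Y (U ω)} ≤ ENNReal.ofReal Y.trace

/-- Matrix supermartingale: adapted, symmetric, entrywise integrable, and
`E(Y (n+1) | ℱ n) ⪯ Y n` a.s. for every `n`. -/
def IsMatrixSupermartingale {Ω : Type*} {m0 : MeasurableSpace Ω} {d : ℕ}
    (ℱ : Filtration ℕ m0) (μ : Measure Ω) (Y : ℕ → Ω → Matrix (Fin d) (Fin d) ℝ) : Prop :=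
  (∀ n ω, (Y n ω).IsHermitian) ∧
  (∀ n i j, StronglyMeasurable[ℱ n] fun ω => Y n ω i j) ∧
  (∀ n i j, Integrable (fun ω => Y n ω i j) μ) ∧
  (∀ n, ∀ᵐ ω ∂μ, LoewnerLE (matCondExp μ (ℱ n) (Y (n + 1)) ω) (Y n ω))

/-- Matrix submartingale: adapted, symmetric, entrywise integrable, and
`E(Y (n+1) | ℱ n) ⪰ Y n` a.s. for every `n`. -/
def IsMatrixSubmartingale {Ω : Type*} {m0 : MeasurableSpace Ω} {d : ℕ}
    (ℱ : Filtration ℕ m0) (μ : Measure Ω) (Y : ℕ → Ω → Matrix (Fin d) (Fin d) ℝ) : Prop :=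
  (∀ n ω, (Y n ω).IsHermitian) ∧
  (∀ n i j, StronglyMeasurable[ℱ n] fun ω => Y n ω i j) ∧
  (∀ n i j, Integrable (fun ω => Y n ω i j) μ) ∧
  (∀ n, ∀ᵐ ω ∂μ, LoewnerLE (Y n ω) (matCondExp μ (ℱ n) (Y (n + 1)) ω))

/-- Exchangeability of a sequence of random matrices: any finitely supported permutation
of the indices leaves the joint law invariant. -/
def MatExchangeable {Ω : Type*} {_ : MeasurableSpace Ω} {d : ℕ} (μ : Measure Ω)
    (X : ℕ → Ω → Matrix (Fin d) (Fin d) ℝ) : Prop :=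
  ∀ σ : Equiv.Perm ℕ, {n | σ n ≠ n}.Finite →
    Measure.map (fun ω n => X (σ n) ω) μ = Measure.map (fun ω n => X n ω) μ


open scoped Topology

/-! For `B = A⁻¹`, `Zₙ = tr (Yₙ B)` is a nonnegative real supermartingale, so optional stopping at
`min τ n` and Fatou's lemma give `E[Z_τ] ≤ E[Z₀] = tr (E[Y₀] B)`. Conjugating by `A^{-1/2}`,
`Y_τ ⋠ A^{1/2} U A^{1/2}` iff `A^{-1/2} Y_τ A^{-1/2} ⋠ U`. Once the `F_∞`-measurable `Y_τ` is
frozen, trace super-uniformity of the independent `U` bounds the probability of this event by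
`tr (A^{-1/2} Y_τ A^{-1/2}) = Z_τ`. The freezing is done by hand: `Y_τ` is rounded up, in the
Loewner order, to a countable grid, on whose cells independence applies set by set; the rounding
costs `O(mesh)` in trace. -/

section SquareRoot

open scoped MatrixOrder

variable {d : ℕ} {A : Matrix (Fin d) (Fin d) ℝ}

theorem matCFC_eq_cfc (f : ℝ → ℝ) {X : Matrix (Fin d) (Fin d) ℝ} (hX : X.IsHermitian) :
    matCFC f X = cfc f X := by
  rw [hX.cfc_eq, matCFC, dif_pos hX, Matrix.IsHermitian.cfc, Unitary.conjStarAlgAut_apply]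
  rfl

theorem matSqrt_eq_sqrt (hA : A.PosSemidef) : matSqrt A = CFC.sqrt A := by
  rw [matSqrt, matCFC_eq_cfc _ hA.1,
    CFC.sqrt_eq_real_sqrt A (Matrix.nonneg_iff_posSemidef.2 hA), cfcₙ_eq_cfc]

theorem matSqrt_mul_self (hA : A.PosSemidef) : matSqrt A * matSqrt A = A := by
  rw [matSqrt_eq_sqrt hA, CFC.sqrt_mul_sqrt_self A (Matrix.nonneg_iff_posSemidef.2 hA)]

theorem isHermitian_matSqrt (hA : A.PosSemidef) : (matSqrt A).IsHermitian := by
  rw [matSqrt_eq_sqrt hA]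
  exact (CFC.sqrt_nonneg A).isSelfAdjoint

end SquareRoot

section Loewner

variable {d : ℕ} {P Q S : Matrix (Fin d) (Fin d) ℝ}

theorem LoewnerLE.trans (hPQ : LoewnerLE P Q) (hQS : LoewnerLE Q S) : LoewnerLE P S := by
  simpa [LoewnerLE] using hQS.add hPQ

theorem LoewnerLE.posSemidef (hPQ : LoewnerLE P Q) (hP : P.PosSemidef) : Q.PosSemidef := by
  simpa [LoewnerLE] using hPQ.add hP

theorem Matrix.PosSemidef.trace_mul_nonneg (hP : P.PosSemidef) (hQ : Q.PosSemidef) :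
    0 ≤ (P * Q).trace := by
  set R := matSqrt Q
  have hRPR : (R * P * R).PosSemidef := by
    have := hP.mul_mul_conjTranspose_same R
    rwa [(isHermitian_matSqrt hQ).eq] at this
  calc 0 ≤ (R * P * R).trace := hRPR.trace_nonneg
    _ = (P * Q).trace := by
      rw [Matrix.trace_mul_comm, ← Matrix.mul_assoc, matSqrt_mul_self hQ, Matrix.trace_mul_comm]

theorem LoewnerLE.trace_mul_le (hPQ : LoewnerLE P Q) (hS : S.PosSemidef) :
    (P * S).trace ≤ (Q * S).trace := by
  have := Matrix.PosSemidef.trace_mul_nonneg hPQ hS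
  rwa [Matrix.sub_mul, Matrix.trace_sub, sub_nonneg] at this

theorem loewnerLE_conj_iff {R : Matrix (Fin d) (Fin d) ℝ} (hR : R.IsHermitian) (hRu : IsUnit R) :
    LoewnerLE P (R * Q * R) ↔ LoewnerLE (R⁻¹ * P * R⁻¹) Q := by
  have hdet : IsUnit R.det := (Matrix.isUnit_iff_isUnit_det R).1 hRu
  unfold LoewnerLE
  rw [← (Matrix.isUnit_nonsing_inv_iff.2 hRu).posSemidef_star_left_conjugate_iff,
    Matrix.star_eq_conjTranspose, hR.inv.eq]
  simp only [Matrix.mul_sub, Matrix.sub_mul, ← Matrix.mul_assoc, Matrix.nonsing_inv_mul _ hdet,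
    Matrix.one_mul]
  simp [Matrix.mul_assoc, Matrix.mul_nonsing_inv _ hdet]

end Loewner

theorem posSemidef_smul_one_sub_of_abs_le {n : Type*} [Fintype n] [DecidableEq n]
    {S : Matrix n n ℝ} (hS : S.IsHermitian) {δ : ℝ} (h : ∀ i j, |S i j| ≤ δ) :
    ((Fintype.card n * δ) • (1 : Matrix n n ℝ) - S).PosSemidef := by
  refine .of_dotProduct_mulVec_nonneg
    ((Matrix.isHermitian_one.smul (IsSelfAdjoint.all _)).sub hS) fun x => ?_
  have hbound (i j : n) : x i * (S i j * x j) ≤ δ * (x i ^ 2 + x j ^ 2) / 2 := by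
    have h1 : x i * (S i j * x j) ≤ |x i| * |x j| * δ :=
      calc x i * (S i j * x j) ≤ |x i * (S i j * x j)| := le_abs_self _
        _ = |x i| * |x j| * |S i j| := by rw [abs_mul, abs_mul]; ring
        _ ≤ |x i| * |x j| * δ := by gcongr; exact h i j
    nlinarith [sq_nonneg (|x i| - |x j|), sq_abs (x i), sq_abs (x j), (abs_nonneg _).trans (h i j)]
  have hquad : x ⬝ᵥ (S *ᵥ x) ≤ Fintype.card n * δ * (x ⬝ᵥ x) :=
    calc x ⬝ᵥ (S *ᵥ x) = ∑ i, ∑ j, x i * (S i j * x j) := by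
          simp [dotProduct, Matrix.mulVec, Finset.mul_sum]
      _ ≤ ∑ i, ∑ j, δ * (x i ^ 2 + x j ^ 2) / 2 := by gcongr with i _ j _; exact hbound i j
      _ = Fintype.card n * δ * (x ⬝ᵥ x) := by
          simp only [add_div, mul_add, Finset.sum_add_distrib, Finset.sum_const, Finset.card_univ,
            dotProduct, ← Finset.mul_sum, ← Finset.sum_div, nsmul_eq_mul, sq]
          ring
  have hx : star x = x := rfl
  rwa [hx, Matrix.sub_mulVec, dotProduct_sub, Matrix.smul_mulVec, Matrix.one_mulVec,
    dotProduct_smul, smul_eq_mul, sub_nonneg]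

theorem abs_sub_mul_floor_div_le {δ : ℝ} (hδ : 0 < δ) (x : ℝ) : |x - δ * ⌊x / δ⌋| ≤ δ := by
  have h1 := Int.floor_le (x / δ)
  have h2 := Int.lt_floor_add_one (x / δ)
  rw [le_div_iff₀ hδ] at h1
  rw [div_lt_iff₀ hδ] at h2
  rw [abs_le]
  constructor <;> nlinarith

def gridIndex {d : ℕ} (δ : ℝ) (M : Matrix (Fin d) (Fin d) ℝ) : Fin d → Fin d → ℤ :=
  fun i j => ⌊M i j / δ⌋

/-- The shift by `d δ • 1` makes this dominate, in the Loewner order, every symmetric matrix whose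
entries lie in the cell `δ k + [0, δ)`. -/
def gridUpper {d : ℕ} (δ : ℝ) (k : Fin d → Fin d → ℤ) : Matrix (Fin d) (Fin d) ℝ :=
  Matrix.of (fun i j => δ * k i j) + ((d : ℝ) * δ) • 1

section Grid

variable {d : ℕ} {δ : ℝ} {M : Matrix (Fin d) (Fin d) ℝ}

theorem measurable_gridIndex (δ : ℝ) : Measurable (gridIndex (d := d) δ) := by
  unfold gridIndex
  fun_prop

theorem gridUpper_gridIndex_eq (M : Matrix (Fin d) (Fin d) ℝ) :
    gridUpper δ (gridIndex δ M) =
      M + (((d : ℝ) * δ) • 1 - (M - Matrix.of fun i j => δ * ⌊M i j / δ⌋)) := by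
  simp only [gridUpper, gridIndex]
  abel

theorem isHermitian_sub_gridFloor (hM : M.IsHermitian) :
    (M - Matrix.of fun i j => δ * ⌊M i j / δ⌋).IsHermitian := by
  refine hM.sub ?_
  ext i j
  simp [← hM.apply i j]

theorem loewnerLE_gridUpper_gridIndex (hδ : 0 < δ) (hM : M.IsHermitian) :
    LoewnerLE M (gridUpper δ (gridIndex δ M)) := by
  rw [LoewnerLE, gridUpper_gridIndex_eq, add_sub_cancel_left]
  simpa using posSemidef_smul_one_sub_of_abs_le (isHermitian_sub_gridFloor hM)
    fun i j => abs_sub_mul_floor_div_le hδ (M i j)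

theorem gridUpper_gridIndex_loewnerLE (hδ : 0 < δ) (hM : M.IsHermitian) :
    LoewnerLE (gridUpper δ (gridIndex δ M)) (M + ((2 * d : ℝ) * δ) • 1) := by
  have h := posSemidef_smul_one_sub_of_abs_le (δ := δ) (isHermitian_sub_gridFloor hM).neg
    fun i j => by rw [Matrix.neg_apply, abs_neg]; exact abs_sub_mul_floor_div_le hδ (M i j)
  rw [LoewnerLE, gridUpper_gridIndex_eq]
  convert h using 1
  simp only [Fintype.card_fin]
  module

end Grid

instance borelSpace_matMS (d : ℕ) : BorelSpace (Matrix (Fin d) (Fin d) ℝ) :=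
  inferInstanceAs (BorelSpace (Fin d → Fin d → ℝ))

theorem isClosed_setOf_posSemidef {n : Type*} [Fintype n] :
    IsClosed {M : Matrix n n ℝ | M.PosSemidef} := by
  have h : {M : Matrix n n ℝ | M.PosSemidef} =
      {M | Mᴴ = M} ∩ ⋂ x : n → ℝ, {M | 0 ≤ star x ⬝ᵥ (M *ᵥ x)} := by
    ext M
    simp [Matrix.posSemidef_iff_dotProduct_mulVec, Matrix.IsHermitian]
  rw [h]
  refine (isClosed_eq (by fun_prop) continuous_id).inter (isClosed_iInter fun x => ?_)
  exact isClosed_le continuous_const (by fun_prop)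

theorem measurableSet_not_loewnerLE_conj {d : ℕ} (W R : Matrix (Fin d) (Fin d) ℝ) :
    MeasurableSet {X : Matrix (Fin d) (Fin d) ℝ | ¬ LoewnerLE W (R * X * R)} :=
  (isClosed_setOf_posSemidef.preimage (by fun_prop)).measurableSet.compl

theorem TraceSuperUniform.measure_not_loewnerLE_sqrt_conj_le {Ω : Type*} {_ : MeasurableSpace Ω}
    {d : ℕ} {μ : Measure Ω} {U : Ω → Matrix (Fin d) (Fin d) ℝ} (hU : TraceSuperUniform μ U)
    {A W : Matrix (Fin d) (Fin d) ℝ} (hA : A.PosDef) (hW : W.PosSemidef) :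
    μ {ω | ¬ LoewnerLE W (matSqrt A * U ω * matSqrt A)} ≤ ENNReal.ofReal (W * A⁻¹).trace := by
  set R := matSqrt A
  have hRR : R * R = A := matSqrt_mul_self hA.posSemidef
  have hR : R.IsHermitian := isHermitian_matSqrt hA.posSemidef
  have hRu : IsUnit R := isUnit_of_mul_isUnit_left (hRR ▸ hA.isUnit)
  have hWR : (R⁻¹ * W * R⁻¹).PosSemidef := by
    have := hW.mul_mul_conjTranspose_same R⁻¹
    rwa [hR.inv.eq] at this
  have htr : (R⁻¹ * W * R⁻¹).trace = (W * A⁻¹).trace := by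
    rw [Matrix.trace_mul_comm, ← Matrix.mul_assoc, ← Matrix.mul_inv_rev, hRR,
      Matrix.trace_mul_comm]
  simp_rw [loewnerLE_conj_iff hR hRu]
  exact htr ▸ hU _ hWR

theorem ProbabilityTheory.Indep.measure_mem_le_lintegral {Ω α β : Type*}
    {m m0 : MeasurableSpace Ω} [mα : MeasurableSpace α] [MeasurableSpace β] [Countable β]
    [MeasurableSingletonClass β] {μ : Measure Ω} {X : Ω → α} {K : Ω → β}
    (hXK : Indep (MeasurableSpace.comap X mα) m μ) (hm : m ≤ m0) (hK : Measurable[m] K)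
    {t : β → Set α} (ht : ∀ b, MeasurableSet (t b)) :
    μ {ω | X ω ∈ t (K ω)} ≤ ∫⁻ ω, μ (X ⁻¹' t (K ω)) ∂μ := by
  have hcover : {ω | X ω ∈ t (K ω)} ⊆ ⋃ b, X ⁻¹' t b ∩ K ⁻¹' {b} := fun ω hω =>
    Set.mem_iUnion.2 ⟨K ω, hω, rfl⟩
  calc μ {ω | X ω ∈ t (K ω)} ≤ ∑' b, μ (X ⁻¹' t b ∩ K ⁻¹' {b}) :=
        (measure_mono hcover).trans (measure_iUnion_le _)
    _ = ∑' b, μ (X ⁻¹' t b) * μ.map K {b} := by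
        congr 1 with b
        rw [(Indep_iff _ _ μ).1 hXK _ _ ⟨t b, ht b, rfl⟩ (hK (measurableSet_singleton b)),
          Measure.map_apply (hK.mono hm le_rfl) (measurableSet_singleton b)]
    _ = ∫⁻ ω, μ (X ⁻¹' t (K ω)) ∂μ := by
        rw [← lintegral_countable', lintegral_map (measurable_of_countable _) (hK.mono hm le_rfl)]

theorem TraceSuperUniform.measure_not_loewnerLE_le_lintegral {Ω : Type*}
    {m m0 : MeasurableSpace Ω} {μ : Measure Ω} [IsFiniteMeasure μ] {d : ℕ}
    {U V : Ω → Matrix (Fin d) (Fin d) ℝ} (hU : TraceSuperUniform μ U)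
    (hUV : Indep (MeasurableSpace.comap U (matMS d)) m μ) (hm : m ≤ m0) (hV : Measurable[m] V)
    (hVpos : ∀ᵐ ω ∂μ, (V ω).PosSemidef) {A : Matrix (Fin d) (Fin d) ℝ} (hA : A.PosDef) :
    μ {ω | ¬ LoewnerLE (V ω) (matSqrt A * U ω * matSqrt A)} ≤
      ∫⁻ ω, ENNReal.ofReal ((V ω * A⁻¹).trace) ∂μ := by
  set R := matSqrt A
  set I := ∫⁻ ω, ENNReal.ofReal ((V ω * A⁻¹).trace) ∂μ
  set c : ℝ := 2 * d * A⁻¹.trace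
  have hB : A⁻¹.PosSemidef := hA.inv.posSemidef
  have hstep (δ : ℝ) (hδ : 0 < δ) :
      μ {ω | ¬ LoewnerLE (V ω) (R * U ω * R)} ≤ I + ENNReal.ofReal (δ * c) * μ Set.univ := by
    set t := fun k => {X | ¬ LoewnerLE (gridUpper δ k) (R * X * R)}
    have hsub : {ω | ¬ LoewnerLE (V ω) (R * U ω * R)} ≤ᵐ[μ]
        {ω | U ω ∈ t (gridIndex δ (V ω))} := by
      filter_upwards [hVpos] with ω hω hE
      exact fun h => hE ((loewnerLE_gridUpper_gridIndex hδ hω.1).trans h)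
    have hcell : ∀ᵐ ω ∂μ, μ (U ⁻¹' t (gridIndex δ (V ω))) ≤
        ENNReal.ofReal ((V ω * A⁻¹).trace + δ * c) := by
      filter_upwards [hVpos] with ω hω
      have hVW := loewnerLE_gridUpper_gridIndex hδ hω.1
      refine (hU.measure_not_loewnerLE_sqrt_conj_le hA (hVW.posSemidef hω)).trans ?_
      refine ENNReal.ofReal_le_ofReal
        (((gridUpper_gridIndex_loewnerLE hδ hω.1).trace_mul_le hB).trans_eq ?_)
      simp only [Matrix.add_mul, Matrix.trace_add, Matrix.smul_mul, Matrix.one_mul,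
        Matrix.trace_smul, smul_eq_mul, c]
      ring
    calc μ {ω | ¬ LoewnerLE (V ω) (R * U ω * R)}
        ≤ μ {ω | U ω ∈ t (gridIndex δ (V ω))} := measure_mono_ae hsub
      _ ≤ ∫⁻ ω, μ (U ⁻¹' t (gridIndex δ (V ω))) ∂μ :=
        hUV.measure_mem_le_lintegral hm ((measurable_gridIndex δ).comp hV)
          fun k => measurableSet_not_loewnerLE_conj _ _
      _ ≤ ∫⁻ ω, ENNReal.ofReal ((V ω * A⁻¹).trace + δ * c) ∂μ := lintegral_mono_ae hcell
      _ ≤ ∫⁻ ω, (ENNReal.ofReal ((V ω * A⁻¹).trace) + ENNReal.ofReal (δ * c)) ∂μ :=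
        lintegral_mono fun ω => ENNReal.ofReal_add_le
      _ = I + ENNReal.ofReal (δ * c) * μ Set.univ := by
        rw [lintegral_add_right _ measurable_const, lintegral_const]
  have hlim : Tendsto (fun δ => I + ENNReal.ofReal (δ * c) * μ Set.univ) (𝓝[>] 0) (𝓝 I) := by
    have hc : Tendsto (fun δ : ℝ => δ * c) (𝓝 0) (𝓝 0) := by
      simpa using (continuous_mul_const c).tendsto 0
    have h0 : Tendsto (fun δ : ℝ => ENNReal.ofReal (δ * c)) (𝓝[>] 0) (𝓝 0) := by
      simpa using (ENNReal.tendsto_ofReal hc).mono_left nhdsWithin_le_nhds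
    simpa using tendsto_const_nhds.add
      (ENNReal.Tendsto.mul_const h0 (Or.inr (measure_ne_top μ _)))
  exact ge_of_tendsto hlim (eventually_nhdsWithin_of_forall hstep)

theorem Matrix.trace_mul_eq_sum_prod {n R : Type*} [Fintype n] [NonUnitalCommSemiring R]
    (M N : Matrix n n R) : (M * N).trace = ∑ p : n × n, N p.2 p.1 * M p.1 p.2 := by
  simp [Matrix.trace, Matrix.mul_apply, ← Finset.univ_product_univ, Finset.sum_product, mul_comm]

section RandomMatrix

variable {Ω : Type*} {m0 : MeasurableSpace Ω} {μ : Measure Ω} {d : ℕ}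

theorem integral_trace_mul {X : Ω → Matrix (Fin d) (Fin d) ℝ}
    (hX : ∀ i j, Integrable (fun ω => X ω i j) μ) (B : Matrix (Fin d) (Fin d) ℝ) :
    ∫ ω, (X ω * B).trace ∂μ = (matExpect μ X * B).trace := by
  simp_rw [Matrix.trace_mul_eq_sum_prod]
  rw [integral_finsetSum _ fun p _ => (hX p.1 p.2).const_mul _]
  simp [integral_const_mul, matExpect]

theorem condExp_trace_mul (m : MeasurableSpace Ω) {X : Ω → Matrix (Fin d) (Fin d) ℝ}
    (hX : ∀ i j, Integrable (fun ω => X ω i j) μ) (B : Matrix (Fin d) (Fin d) ℝ) :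
    μ[fun ω => (X ω * B).trace | m] =ᵐ[μ] fun ω => (matCondExp μ m X ω * B).trace := by
  have hsum : (fun ω => (X ω * B).trace) =
      ∑ p : Fin d × Fin d, B p.2 p.1 • fun ω => X ω p.1 p.2 := by
    ext ω
    simp [Matrix.trace_mul_eq_sum_prod]
  have hcond : ∀ᵐ ω ∂μ, ∀ p : Fin d × Fin d, μ[B p.2 p.1 • fun ω => X ω p.1 p.2 | m] ω =
      B p.2 p.1 * μ[fun ω => X ω p.1 p.2 | m] ω :=
    ae_all_iff.2 fun p => condExp_smul _ _ m
  rw [hsum]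
  filter_upwards [condExp_finsetSum (s := Finset.univ)
    (fun (p : Fin d × Fin d) _ => (hX p.1 p.2).smul (B p.2 p.1)) m, hcond] with ω hω hω'
  rw [hω, Finset.sum_apply, Matrix.trace_mul_eq_sum_prod]
  exact Finset.sum_congr rfl fun p _ => hω' p

variable {ℱ : Filtration ℕ m0} {Y : ℕ → Ω → Matrix (Fin d) (Fin d) ℝ}

theorem IsMatrixSupermartingale.measurable (hY : IsMatrixSupermartingale ℱ μ Y) (n : ℕ) :
    Measurable[ℱ n] (Y n) := by
  let _ : MeasurableSpace Ω := ℱ n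
  exact measurable_pi_lambda _ fun i => measurable_pi_lambda _ fun j => (hY.2.1 n i j).measurable

theorem IsMatrixSupermartingale.supermartingale_trace_mul [IsFiniteMeasure μ]
    (hY : IsMatrixSupermartingale ℱ μ Y) {B : Matrix (Fin d) (Fin d) ℝ} (hB : B.PosSemidef) :
    Supermartingale (fun n ω => (Y n ω * B).trace) ℱ μ := by
  obtain ⟨-, hadapt, hint, hsuper⟩ := hY
  refine supermartingale_nat (fun n => ?_) (fun n => ?_) fun n => ?_
  · simp_rw [Matrix.trace_mul_eq_sum_prod]
    exact Finset.stronglyMeasurable_fun_sum _ fun p _ => (hadapt n p.1 p.2).const_mul _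
  · simp_rw [Matrix.trace_mul_eq_sum_prod]
    exact integrable_finsetSum _ fun p _ => (hint n p.1 p.2).const_mul _
  · filter_upwards [condExp_trace_mul (ℱ n) (hint (n + 1)) B, hsuper n] with ω hω hle
    rw [hω]
    exact hle.trace_mul_le hB

end RandomMatrix

namespace MeasureTheory

variable {Ω : Type*} {m0 : MeasurableSpace Ω} {ℱ : Filtration ℕ m0} {τ : Ω → ℕ}

theorem IsStoppingTime.measurable_iSup_stopped {β : Type*} [MeasurableSpace β]
    {X : ℕ → Ω → β} (hX : ∀ n, Measurable[ℱ n] (X n))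
    (hτ : IsStoppingTime ℱ (fun ω => (τ ω : WithTop ℕ))) :
    Measurable[⨆ n, ℱ n] (fun ω => X (τ ω) ω) := by
  intro s hs
  have h : (fun ω => X (τ ω) ω) ⁻¹' s = ⋃ n, {ω | τ ω = n} ∩ X n ⁻¹' s := by
    ext ω
    simp
  rw [h]
  refine MeasurableSet.iUnion fun n => le_iSup (fun n => (ℱ n : MeasurableSpace Ω)) n _ ?_
  exact (by simpa using hτ.measurableSet_eq n : MeasurableSet[ℱ n] {ω | τ ω = n}).inter (hX n hs)

theorem Supermartingale.lintegral_ofReal_stopped_le {μ : Measure Ω} [IsFiniteMeasure μ]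
    {f : ℕ → Ω → ℝ} (hf : Supermartingale f ℱ μ) (hf0 : ∀ n, 0 ≤ᵐ[μ] f n)
    (hτ : IsStoppingTime ℱ (fun ω => (τ ω : WithTop ℕ))) :
    ∫⁻ ω, ENNReal.ofReal (f (τ ω) ω) ∂μ ≤ ENNReal.ofReal (∫ ω, f 0 ω ∂μ) := by
  set g := stoppedProcess f (fun ω => (τ ω : WithTop ℕ))
  have hg : Supermartingale g ℱ μ := by simpa [g] using (hf.neg.stoppedProcess hτ).neg
  have hg0 (n : ℕ) : 0 ≤ᵐ[μ] g n := by
    filter_upwards [ae_all_iff.2 hf0] with ω hω using hω _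
  have hg_lim (ω : Ω) :
      ENNReal.ofReal (f (τ ω) ω) = liminf (fun n => ENNReal.ofReal (g n ω)) atTop := by
    refine (Tendsto.liminf_eq (tendsto_const_nhds.congr' ?_)).symm
    filter_upwards [eventually_ge_atTop (τ ω)] with n hn
    simp only [g, stoppedProcess_eq_of_ge (u := f) (τ := fun ω => (τ ω : WithTop ℕ))
      (WithTop.coe_le_coe.2 hn)]
    rfl
  have hg_le (n : ℕ) : ∫⁻ ω, ENNReal.ofReal (g n ω) ∂μ ≤ ENNReal.ofReal (∫ ω, f 0 ω ∂μ) := by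
    rw [← ofReal_integral_eq_lintegral_ofReal (hg.integrable n) (hg0 n)]
    refine ENNReal.ofReal_le_ofReal ?_
    simpa [g, stoppedProcess_eq_of_le] using hg.setIntegral_le (Nat.zero_le n) MeasurableSet.univ
  calc ∫⁻ ω, ENNReal.ofReal (f (τ ω) ω) ∂μ
      = ∫⁻ ω, liminf (fun n => ENNReal.ofReal (g n ω)) atTop ∂μ := lintegral_congr hg_lim
    _ ≤ liminf (fun n => ∫⁻ ω, ENNReal.ofReal (g n ω) ∂μ) atTop :=
      lintegral_liminf_le fun n =>
        ((hg.stronglyAdapted n).mono (ℱ.le n)).measurable.ennreal_ofReal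
    _ ≤ ENNReal.ofReal (∫ ω, f 0 ω ∂μ) :=
      liminf_le_of_frequently_le' (Frequently.of_forall hg_le)

end MeasureTheory

theorem stmt10_general {Ω : Type*} {m0 : MeasurableSpace Ω} (μ : Measure Ω) [IsProbabilityMeasure μ]
    {d : ℕ} (ℱ : Filtration ℕ m0)
    (Y : ℕ → Ω → Matrix (Fin d) (Fin d) ℝ)
    (hY : IsMatrixSupermartingale ℱ μ Y)
    (hpos : ∀ n, ∀ᵐ ω ∂μ, (Y n ω).PosSemidef)
    (τ : Ω → ℕ) (hτ : IsStoppingTime ℱ (fun ω => (τ ω : WithTop ℕ)))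
    (U : Ω → Matrix (Fin d) (Fin d) ℝ)
    (hU : TraceSuperUniform μ U)
    (hUindep : Indep (MeasurableSpace.comap U (matMS d)) (⨆ n, (ℱ n : MeasurableSpace Ω)) μ)
    (A : Matrix (Fin d) (Fin d) ℝ) (hA : A.PosDef) :
    μ {ω | ¬ LoewnerLE (Y (τ ω) ω) (matSqrt A * U ω * matSqrt A)} ≤
      ENNReal.ofReal ((matExpect μ (Y 0) * A⁻¹).trace) := by
  have hB : A⁻¹.PosSemidef := hA.inv.posSemidef
  have hZ0 (n : ℕ) : 0 ≤ᵐ[μ] fun ω => (Y n ω * A⁻¹).trace := by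
    filter_upwards [hpos n] with ω hω using hω.trace_mul_nonneg hB
  have hYτ : Measurable[⨆ n, ℱ n] fun ω => Y (τ ω) ω :=
    hτ.measurable_iSup_stopped hY.measurable
  have hYτ_pos : ∀ᵐ ω ∂μ, (Y (τ ω) ω).PosSemidef := by
    filter_upwards [ae_all_iff.2 hpos] with ω hω using hω (τ ω)
  calc μ {ω | ¬ LoewnerLE (Y (τ ω) ω) (matSqrt A * U ω * matSqrt A)}
      ≤ ∫⁻ ω, ENNReal.ofReal ((Y (τ ω) ω * A⁻¹).trace) ∂μ :=
        hU.measure_not_loewnerLE_le_lintegral hUindep (iSup_le ℱ.le) hYτ hYτ_pos hA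
    _ ≤ ENNReal.ofReal (∫ ω, (Y 0 ω * A⁻¹).trace ∂μ) :=
        (hY.supermartingale_trace_mul hB).lintegral_ofReal_stopped_le hZ0 hτ
    _ = ENNReal.ofReal ((matExpect μ (Y 0) * A⁻¹).trace) := by
        rw [integral_trace_mul (hY.2.2.1 0)]

/-- **Uniformly randomized matrix Ville's inequality (stopped form).**
For an a.s. positive semidefinite matrix supermartingale `Y`, a finite stopping time `τ`, a
trace super-uniform random PSD matrix `U` independent of `F_∞`, and `A ≻ 0`:
`P( Y_τ ⋠ A^{1/2} U A^{1/2} ) ≤ tr( E[Y₀] A⁻¹ )`. -/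
theorem stmt10 {Ω : Type*} {m0 : MeasurableSpace Ω} (μ : Measure Ω) [IsProbabilityMeasure μ]
    {d : ℕ} (ℱ : Filtration ℕ m0)
    (Y : ℕ → Ω → Matrix (Fin d) (Fin d) ℝ)
    (hY : IsMatrixSupermartingale ℱ μ Y)
    (hpos : ∀ n, ∀ᵐ ω ∂μ, (Y n ω).PosSemidef)
    (τ : Ω → ℕ) (hτ : IsStoppingTime ℱ (fun ω => (τ ω : WithTop ℕ)))
    (U : Ω → Matrix (Fin d) (Fin d) ℝ)
    (hUpsd : ∀ ω, (U ω).PosSemidef)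
    (hU : TraceSuperUniform μ U)
    (hUindep : Indep (MeasurableSpace.comap U (matMS d)) (⨆ n, (ℱ n : MeasurableSpace Ω)) μ)
    (A : Matrix (Fin d) (Fin d) ℝ) (hA : A.PosDef) :
    μ {ω | ¬ LoewnerLE (Y (τ ω) ω) (matSqrt A * U ω * matSqrt A)} ≤
      ENNReal.ofReal ((matExpect μ (Y 0) * A⁻¹).trace) :=
  stmt10_general μ ℱ Y hY hpos τ hτ U hU hUindep A hA

end
end

section
/- Let X be a random d×d real symmetric matrix with mean E[X] = M and variance bound E[(X − M)²] ⪯ V, and let γ be a real number. Then E[ exp( γ(X − M) − (γ²/6)(X − M)² ) ] ⪯ exp( (γ²/3) V ). -/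
/-!
With `Y = X - M`, the scalar inequality `exp (x - x²/6) ≤ 1 + x + x²/3`, applied through the
functional calculus to the eigenvalues of `γ Y`, gives the pointwise bound
`exp (γ Y - γ² Y²/6) ⪯ 1 + γ Y + γ² Y²/3`. Taking expectations kills the linear term since
`E Y = 0`, leaving `1 + (γ²/3) E[Y²] ⪯ 1 + (γ²/3) V ⪯ exp ((γ²/3) V)`, the last step being
`1 + t ≤ eᵗ` on the spectrum.
-/

open MeasureTheory ProbabilityTheory Matrix Filter

noncomputable section

open scoped MatrixOrder

theorem Real.exp_sub_sq_div_six_le (x : ℝ) :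
    Real.exp (x - x ^ 2 / 6) ≤ 1 + x + x ^ 2 / 3 := by
  set F : ℝ → ℝ := fun y => (1 + y + y ^ 2 / 3) * Real.exp (-(y - y ^ 2 / 6))
  have hF : ∀ y, HasDerivAt F (y ^ 3 / 9 * Real.exp (-(y - y ^ 2 / 6))) y := fun y => by
    have hq := ((hasDerivAt_id' y).const_add 1).add ((hasDerivAt_pow 2 y).div_const 3)
    have hg := ((hasDerivAt_id' y).sub ((hasDerivAt_pow 2 y).div_const 6)).neg
    exact (hq.mul hg.exp).congr_deriv
      (by simp only [Pi.add_apply, Pi.neg_apply, Pi.sub_apply]; ring)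
  have hFcont : Continuous F := by fun_prop
  have hF_diff : Differentiable ℝ F := fun y => (hF y).differentiableAt
  -- `F` decreases on `(-∞, 0]` and increases on `[0, ∞)`, so it is minimal at `F 0 = 1`.
  have hF_ge : 1 ≤ F x := by
    rcases le_total 0 x with hx | hx
    · have hmono : MonotoneOn F (Set.Ici 0) :=
        monotoneOn_of_deriv_nonneg (convex_Ici 0) hFcont.continuousOn hF_diff.differentiableOn
          fun y hy => by
            rw [(hF y).deriv]
            have : 0 ≤ y := le_of_lt (by simpa using hy)
            positivity
      simpa [F] using hmono Set.self_mem_Ici hx hx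
    · have hanti : AntitoneOn F (Set.Iic 0) :=
        antitoneOn_of_deriv_nonpos (convex_Iic 0) hFcont.continuousOn hF_diff.differentiableOn
          fun y hy => by
            rw [(hF y).deriv]
            have : y < 0 := by simpa using hy
            exact mul_nonpos_of_nonpos_of_nonneg (by nlinarith [sq_nonneg y]) (Real.exp_pos _).le
      simpa [F] using hanti hx Set.self_mem_Iic hx
  calc Real.exp (x - x ^ 2 / 6) ≤ Real.exp (x - x ^ 2 / 6) * F x :=
        le_mul_of_one_le_right (Real.exp_pos _).le hF_ge
    _ = 1 + x + x ^ 2 / 3 := by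
        rw [mul_left_comm, ← Real.exp_add, add_neg_cancel, Real.exp_zero, mul_one]

namespace Matrix.IsHermitian

variable {n : Type*} [Fintype n] [DecidableEq n] {A : Matrix n n ℝ}

theorem cfc_exp (hA : A.IsHermitian) : cfc Real.exp A = NormedSpace.exp A := by
  conv_rhs => rw [hA.spectral_theorem]
  rw [hA.cfc_eq, IsHermitian.cfc, Unitary.conjStarAlgAut_apply, Unitary.conjStarAlgAut_apply]
  refine .symm <| (exp_units_conj (Unitary.toUnits hA.eigenvectorUnitary)
    (diagonal (RCLike.ofReal ∘ hA.eigenvalues))).trans ?_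
  rw [exp_diagonal, Pi.exp_def]
  simp [Function.comp_def, Real.exp_eq_exp_ℝ]

theorem one_add_le_exp (hA : A.IsHermitian) : 1 + A ≤ NormedSpace.exp A := by
  have h : 1 + A = cfc (fun x : ℝ => 1 + x) A := by
    rw [cfc_const_add (1 : ℝ) (fun x => x) A, cfc_id' ℝ A, map_one]
  rw [h, ← hA.cfc_exp]
  exact cfc_mono fun x _ => by linarith [Real.add_one_le_exp x]

theorem exp_sub_sq_div_six_le (hA : A.IsHermitian) :
    NormedSpace.exp (A - (6⁻¹ : ℝ) • A ^ 2) ≤ 1 + A + (3⁻¹ : ℝ) • A ^ 2 := by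
  have hlhs : cfc (fun x : ℝ => x - 6⁻¹ * x ^ 2) A = A - (6⁻¹ : ℝ) • A ^ 2 := by
    rw [cfc_sub _ _ A, cfc_id' ℝ A, cfc_const_mul _ _ A, cfc_pow _ 2 A, cfc_id' ℝ A]
  have hrhs : cfc (fun x : ℝ => 1 + x + 3⁻¹ * x ^ 2) A = 1 + A + (3⁻¹ : ℝ) • A ^ 2 := by
    rw [cfc_add (a := A) (fun x : ℝ => 1 + x) (fun x => 3⁻¹ * x ^ 2), cfc_const_add _ _ A,
      cfc_id' ℝ A, cfc_const_mul _ _ A, cfc_pow _ 2 A, cfc_id' ℝ A, map_one]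
  rw [← hlhs, ← hrhs, ← (cfc_predicate _ A : IsSelfAdjoint _).isHermitian.cfc_exp,
    ← cfc_comp Real.exp _ A]
  exact cfc_mono fun x _ => by
    simpa only [Function.comp_apply, div_eq_inv_mul] using Real.exp_sub_sq_div_six_le x

end Matrix.IsHermitian

section matExpect

variable {Ω : Type*} {m0 : MeasurableSpace Ω} {μ : Measure Ω} {d : ℕ}
  {f g : Ω → Matrix (Fin d) (Fin d) ℝ}

def MatIntegrable (μ : Measure Ω) (f : Ω → Matrix (Fin d) (Fin d) ℝ) : Prop :=
  ∀ i j, Integrable (fun ω => f ω i j) μ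

theorem MatIntegrable.add (hf : MatIntegrable μ f) (hg : MatIntegrable μ g) :
    MatIntegrable μ (fun ω => f ω + g ω) :=
  fun i j => (hf i j).add (hg i j)

theorem MatIntegrable.sub (hf : MatIntegrable μ f) (hg : MatIntegrable μ g) :
    MatIntegrable μ (fun ω => f ω - g ω) :=
  fun i j => (hf i j).sub (hg i j)

theorem MatIntegrable.const_smul (c : ℝ) (hf : MatIntegrable μ f) :
    MatIntegrable μ (fun ω => c • f ω) :=
  fun i j => (hf i j).const_mul c

theorem matIntegrable_const [IsFiniteMeasure μ] (A : Matrix (Fin d) (Fin d) ℝ) :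
    MatIntegrable μ (fun _ => A) :=
  fun _ _ => integrable_const _

theorem matExpect_add (hf : MatIntegrable μ f) (hg : MatIntegrable μ g) :
    matExpect μ (fun ω => f ω + g ω) = matExpect μ f + matExpect μ g := by
  ext i j
  exact integral_add (hf i j) (hg i j)

theorem matExpect_sub (hf : MatIntegrable μ f) (hg : MatIntegrable μ g) :
    matExpect μ (fun ω => f ω - g ω) = matExpect μ f - matExpect μ g := by
  ext i j
  exact integral_sub (hf i j) (hg i j)

theorem matExpect_smul (c : ℝ) (f : Ω → Matrix (Fin d) (Fin d) ℝ) :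
    matExpect μ (fun ω => c • f ω) = c • matExpect μ f := by
  ext i j
  exact integral_const_mul c _

theorem matExpect_const [IsProbabilityMeasure μ] (A : Matrix (Fin d) (Fin d) ℝ) :
    matExpect μ (fun _ => A) = A := by
  ext i j
  simp [matExpect]

theorem isHermitian_matExpect (hf : ∀ ω, (f ω).IsHermitian) : (matExpect μ f).IsHermitian := by
  ext i j
  exact integral_congr_ae (.of_forall fun ω => (hf ω).apply i j)

theorem dotProduct_mulVec_matExpect (hf : MatIntegrable μ f) (x y : Fin d → ℝ) :
    x ⬝ᵥ (matExpect μ f *ᵥ y) = ∫ ω, x ⬝ᵥ (f ω *ᵥ y) ∂μ := by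
  simp only [dotProduct, mulVec, matExpect, of_apply]
  rw [integral_finsetSum _ fun i _ =>
    (integrable_finsetSum _ fun j _ => (hf i j).mul_const (y j)).const_mul (x i)]
  refine Finset.sum_congr rfl fun i _ => ?_
  rw [integral_const_mul, integral_finsetSum _ fun j _ => (hf i j).mul_const (y j)]
  simp only [integral_mul_const]

theorem posSemidef_matExpect (hf : MatIntegrable μ f) (hpsd : ∀ ω, (f ω).PosSemidef) :
    (matExpect μ f).PosSemidef := by
  refine posSemidef_iff_dotProduct_mulVec.mpr
    ⟨isHermitian_matExpect fun ω => (hpsd ω).isHermitian, fun x => ?_⟩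
  rw [dotProduct_mulVec_matExpect hf]
  exact integral_nonneg fun ω => (posSemidef_iff_dotProduct_mulVec.mp (hpsd ω)).2 x

theorem matExpect_mono (hf : MatIntegrable μ f) (hg : MatIntegrable μ g)
    (hfg : ∀ ω, f ω ≤ g ω) : matExpect μ f ≤ matExpect μ g := by
  rw [le_iff, ← matExpect_sub hg hf]
  exact posSemidef_matExpect (hg.sub hf) hfg

theorem matExpect_exp_sub_le_one_add [IsProbabilityMeasure μ]
    {Y : Ω → Matrix (Fin d) (Fin d) ℝ} (hY : ∀ ω, (Y ω).IsHermitian)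
    (hYint : MatIntegrable μ Y) (hmean : matExpect μ Y = 0)
    (hsq : MatIntegrable μ (fun ω => Y ω * Y ω)) (γ : ℝ)
    (hexp : MatIntegrable μ (fun ω => matExpMat (γ • Y ω - (γ ^ 2 / 6) • (Y ω * Y ω)))) :
    matExpect μ (fun ω => matExpMat (γ • Y ω - (γ ^ 2 / 6) • (Y ω * Y ω))) ≤
      1 + (γ ^ 2 / 3) • matExpect μ (fun ω => Y ω * Y ω) := by
  have hpoint : ∀ ω, matExpMat (γ • Y ω - (γ ^ 2 / 6) • (Y ω * Y ω)) ≤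
      1 + γ • Y ω + (γ ^ 2 / 3) • (Y ω * Y ω) := fun ω => by
    have hsmul_sq : ∀ c : ℝ, c⁻¹ • (γ • Y ω) ^ 2 = (γ ^ 2 / c) • (Y ω * Y ω) :=
      fun c => by rw [smul_pow, smul_smul, pow_two (Y ω), div_eq_mul_inv, mul_comm]
    simpa only [hsmul_sq, matExpMat] using ((hY ω).smul (.all γ)).exp_sub_sq_div_six_le
  have hlin : MatIntegrable μ (fun ω => 1 + γ • Y ω) :=
    (matIntegrable_const 1).add (hYint.const_smul γ)
  calc _ ≤ matExpect μ (fun ω => 1 + γ • Y ω + (γ ^ 2 / 3) • (Y ω * Y ω)) :=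
        matExpect_mono hexp (hlin.add (hsq.const_smul _)) hpoint
    _ = 1 + (γ ^ 2 / 3) • matExpect μ (fun ω => Y ω * Y ω) := by
        rw [matExpect_add hlin (hsq.const_smul _),
          matExpect_add (matIntegrable_const 1) (hYint.const_smul γ), matExpect_const,
          matExpect_smul, matExpect_smul, hmean, smul_zero, add_zero]

end matExpect

theorem loewnerLE_iff_le {d : ℕ} {A B : Matrix (Fin d) (Fin d) ℝ} : LoewnerLE A B ↔ A ≤ B :=
  Iff.rfl

/-- **One-step self-normalized matrix MGF bound.**
If `X` is a random symmetric matrix with mean `M` and `E[(X - M)²] ⪯ V`, then for every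
`γ : ℝ`, `E[ exp(γ(X - M) - (γ²/6)(X - M)²) ] ⪯ exp((γ²/3) V)`. -/
theorem stmt13 {Ω : Type*} {m0 : MeasurableSpace Ω} (μ : Measure Ω) [IsProbabilityMeasure μ]
    {d : ℕ} (X : Ω → Matrix (Fin d) (Fin d) ℝ)
    (hsymm : ∀ ω, (X ω).IsHermitian)
    (hXint : ∀ i j, Integrable (fun ω => X ω i j) μ)
    (M V : Matrix (Fin d) (Fin d) ℝ) (hM : matExpect μ X = M) (hVsymm : V.IsHermitian)
    (hsqint : ∀ i j, Integrable (fun ω => ((X ω - M) * (X ω - M)) i j) μ)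
    (hV : LoewnerLE (matExpect μ (fun ω => (X ω - M) * (X ω - M))) V)
    (γ : ℝ)
    (hexpint : ∀ i j, Integrable (fun ω =>
      matExpMat (γ • (X ω - M) - (γ ^ 2 / 6) • ((X ω - M) * (X ω - M))) i j) μ) :
    LoewnerLE
      (matExpect μ (fun ω =>
        matExpMat (γ • (X ω - M) - (γ ^ 2 / 6) • ((X ω - M) * (X ω - M)))))
      (matExpMat ((γ ^ 2 / 3) • V)) := by
  rw [loewnerLE_iff_le] at hV ⊢
  have hMherm : M.IsHermitian := hM ▸ isHermitian_matExpect hsymm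
  have hmean : matExpect μ (fun ω => X ω - M) = 0 := by
    rw [matExpect_sub hXint (matIntegrable_const M), matExpect_const, hM, sub_self]
  calc _ ≤ 1 + (γ ^ 2 / 3) • matExpect μ (fun ω => (X ω - M) * (X ω - M)) :=
        matExpect_exp_sub_le_one_add (fun ω => (hsymm ω).sub hMherm)
          (MatIntegrable.sub hXint (matIntegrable_const M)) hmean hsqint γ hexpint
    _ ≤ 1 + (γ ^ 2 / 3) • V := by gcongr
    _ ≤ matExpMat ((γ ^ 2 / 3) • V) := (hVsymm.smul (.all _)).one_add_le_exp
end
end
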